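/- Hereditary substitutions of simply kinded types commute: if γ₁ ⊢ U : j, and γ₁, X:j, γ₂ ⊢ V : k, and γ₁, X:j, γ₂, Y:k, γ₃ ⊢ W : l (simple kinding), then W[Y:=V]_k[X:=U]_j ≡ W[X:=U]_j[Y:=V[X:=U]_j]_k; analogous statements hold for simply well-formed kinds, neutral types, spines, and reducing applications. -/

import Mathlib

/-!
In de Bruijn form the variable `Y` of the subject is the index `γ₃.length` and `X` the index
`γ₃.length + γ₂.length + 1`; after `Y` is substituted, `X` sits at `γ₃.length + γ₂.length`.

All syntactic classes are treated at once by well-founded induction on the lexicographic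
measure `(|j| + |k|, level, size of the subject)`, where pushing a substitution through a
reducing application is one level below substitution itself. The only non-congruence cases are
neutrals headed by `X` or `Y`: there both sides become reducing applications, and commuting a
substitution with a β-step of `rapp` at shape `k₁ → k₂` calls the commutation back with that
arrow shape replaced by its domain `k₁`. Kinding is what rules out the degenerate clauses of
hereditary substitution: substitution preserves kinding, so every reducing application met
along the way applies an operator abstraction at an arrow shape.
-/

set_option autoImplicit true
set_option maxHeartbeats 1000000
set_option linter.unusedVariables false

/-- Shapes (simple kinds): `k ::= ∗ | k → k`. -/
inductive SKind : Type
  | star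
  | arr (j k : SKind)
/-! ## Spine-form syntax of Fω.. types and kinds (de Bruijn representation). -/

mutual
/-- Eliminations: a head applied to a spine of arguments, `E ::= F E⃗`. -/
inductive SpTy : Type
  | elim (h : SpHead) (s : SpSpine)

/-- Heads: `F ::= X | ⊤ | ⊥ | D → E | ∀X:K.E | λX:K.E`. -/
inductive SpHead : Type
  | var (x : ℕ)
  | top
  | bot
  | arr (a b : SpTy)
  | all (k : SpKd) (a : SpTy)
  | lam (k : SpKd) (a : SpTy)

/-- Spines: finite sequences of eliminations. -/
inductive SpSpine : Type
  | nil
  | cons (a : SpTy) (s : SpSpine)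

/-- Kinds in spine form: `K ::= A..B | (X:J)→K`. -/
inductive SpKd : Type
  | intv (a b : SpTy)
  | pi (j k : SpKd)
end

/-- Shape erasure of spine-form kinds: `|A..B| = ∗`, `|(X:J)→K| = |J| → |K|`. -/
def SpKd.shape : SpKd → SKind
  | .intv _ _ => .star
  | .pi j k => .arr j.shape k.shape

/-- Spine concatenation. -/
def SpSpine.append : SpSpine → SpSpine → SpSpine
  | .nil, s' => s'
  | .cons a s, s' => .cons a (s.append s')

/-- (Non-reducing) application of an elimination to a spine. -/
def SpTy.appSp : SpTy → SpSpine → SpTy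
  | .elim h s, s' => .elim h (s.append s')

/-- (Non-reducing) application of an elimination to a single argument. -/
def SpTy.app1 (e d : SpTy) : SpTy := e.appSp (.cons d .nil)

mutual
/-- Shift: increment all variables `≥ c` by one. -/
def SpTy.shift (c : ℕ) : SpTy → SpTy
  | .elim h s => .elim (h.shift c) (s.shift c)

def SpHead.shift (c : ℕ) : SpHead → SpHead
  | .var x => if x < c then .var x else .var (x + 1)
  | .top => .top
  | .bot => .bot
  | .arr a b => .arr (a.shift c) (b.shift c)
  | .all k a => .all (k.shift c) (a.shift (c + 1))
  | .lam k a => .lam (k.shift c) (a.shift (c + 1))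

def SpSpine.shift (c : ℕ) : SpSpine → SpSpine
  | .nil => .nil
  | .cons a s => .cons (a.shift c) (s.shift c)

def SpKd.shift (c : ℕ) : SpKd → SpKd
  | .intv a b => .intv (a.shift c) (b.shift c)
  | .pi j k => .pi (j.shift c) (k.shift (c + 1))
end

/-- Weakening by `n` fresh innermost variables. -/
def SpTy.weaken (n : ℕ) (e : SpTy) : SpTy := (SpTy.shift 0)^[n] e

/-- Weakening of kinds by `n` fresh innermost variables. -/
def SpKd.weaken (n : ℕ) (k : SpKd) : SpKd := (SpKd.shift 0)^[n] k

mutual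
/-- Ordinary (capture-avoiding, non-hereditary) substitution on spine form. -/
def SpTy.subst : SpTy → ℕ → SpTy → SpTy
  | .elim (.var y) s, x, v =>
      if y = x then v.appSp (s.subst x v)
      else .elim (.var (if x < y then y - 1 else y)) (s.subst x v)
  | .elim .top s, x, v => .elim .top (s.subst x v)
  | .elim .bot s, x, v => .elim .bot (s.subst x v)
  | .elim (.arr a b) s, x, v => .elim (.arr (a.subst x v) (b.subst x v)) (s.subst x v)
  | .elim (.all k a) s, x, v =>
      .elim (.all (k.subst x v) (a.subst (x + 1) (v.shift 0))) (s.subst x v)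
  | .elim (.lam k a) s, x, v =>
      .elim (.lam (k.subst x v) (a.subst (x + 1) (v.shift 0))) (s.subst x v)

def SpSpine.subst : SpSpine → ℕ → SpTy → SpSpine
  | .nil, _, _ => .nil
  | .cons a s, x, v => .cons (a.subst x v) (s.subst x v)

def SpKd.subst : SpKd → ℕ → SpTy → SpKd
  | .intv a b, x, v => .intv (a.subst x v) (b.subst x v)
  | .pi j k, x, v => .pi (j.subst x v) (k.subst (x + 1) (v.shift 0))
end

mutual
/-- Hereditary substitution `e[x := v]_k` of the elimination `v` for variable
`x` at shape `k`, defined mutually with reducing application by recursion on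
the shape `k`. -/
def SpTy.hsubst : SpTy → ℕ → SKind → SpTy → SpTy
  | .elim (.var y) s, x, k, v =>
      if y = x then SpTy.rappSp v k (s.hsubst x k v)
      else .elim (.var (if x < y then y - 1 else y)) (s.hsubst x k v)
  | .elim .top s, x, k, v => .elim .top (s.hsubst x k v)
  | .elim .bot s, x, k, v => .elim .bot (s.hsubst x k v)
  | .elim (.arr a b) s, x, k, v =>
      .elim (.arr (a.hsubst x k v) (b.hsubst x k v)) (s.hsubst x k v)
  | .elim (.all j a) s, x, k, v =>
      .elim (.all (j.hsubst x k v) (a.hsubst (x + 1) k (v.shift 0))) (s.hsubst x k v)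
  | .elim (.lam j a) s, x, k, v =>
      .elim (.lam (j.hsubst x k v) (a.hsubst (x + 1) k (v.shift 0))) (s.hsubst x k v)
termination_by e x k v => (sizeOf k, 1, sizeOf e)

/-- Hereditary substitution in spines (pointwise). -/
def SpSpine.hsubst : SpSpine → ℕ → SKind → SpTy → SpSpine
  | .nil, _, _, _ => .nil
  | .cons a s, x, k, v => .cons (a.hsubst x k v) (s.hsubst x k v)
termination_by s x k v => (sizeOf k, 1, sizeOf s)

/-- Hereditary substitution in kinds. -/
def SpKd.hsubst : SpKd → ℕ → SKind → SpTy → SpKd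
  | .intv a b, x, k, v => .intv (a.hsubst x k v) (b.hsubst x k v)
  | .pi j k', x, k, v => .pi (j.hsubst x k v) (k'.hsubst (x + 1) k (v.shift 0))
termination_by K x k v => (sizeOf k, 1, sizeOf K)

/-- Reducing application `d ·_k v` to a single argument:  β-contracts when `d`
is an operator abstraction and `k` is an arrow shape. -/
def SpTy.rapp : SpTy → SKind → SpTy → SpTy
  | d, .star, v => d.app1 v
  | .elim (.lam _ d') .nil, .arr k1 _, v => d'.hsubst 0 k1 v
  | .elim (.var y) s, .arr _ _, v => SpTy.app1 (.elim (.var y) s) v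
  | .elim .top s, .arr _ _, v => SpTy.app1 (.elim .top s) v
  | .elim .bot s, .arr _ _, v => SpTy.app1 (.elim .bot s) v
  | .elim (.arr a b) s, .arr _ _, v => SpTy.app1 (.elim (.arr a b) s) v
  | .elim (.all j a) s, .arr _ _, v => SpTy.app1 (.elim (.all j a) s) v
  | .elim (.lam j a) (.cons b s), .arr _ _, v => SpTy.app1 (.elim (.lam j a) (.cons b s)) v
termination_by d k v => (sizeOf k, 0, 0)

/-- Reducing application `d ·_k s⃗` to a spine, unwinding `s⃗` along `k`. -/
def SpTy.rappSp : SpTy → SKind → SpSpine → SpTy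
  | d, _, .nil => d
  | d, .arr k1 k2, .cons e es => SpTy.rappSp (d.rapp (.arr k1 k2) e) k2 es
  | d, .star, .cons e es => d.appSp (.cons e es)
termination_by d k s => (sizeOf k, 0, sizeOf s + 1)
end
/-! ## Simple kinding of β-normal η-long types in shape contexts.
A shape context assigns shapes to type-variable bindings (`some k`) and
marks term-variable bindings with `none`. -/

abbrev SCtx := List (Option SKind)

mutual
/-- Simply well-formed normal kinds: `γ ⊢ K kd`. -/
inductive SWfKd : SCtx → SpKd → Prop
  | intv : SKTy γ U .star → SKTy γ V .star → SWfKd γ (.intv U V)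
  | pi : SWfKd γ J → SWfKd (some J.shape :: γ) K → SWfKd γ (.pi J K)

/-- Simple kinding of neutral types: `γ ⊢ne N : k` (a variable head applied
to a simply kinded spine). -/
inductive SKNe : SCtx → SpTy → SKind → Prop
  | varApp : γ[x]? = some (some j) → SSp γ j s k → SKNe γ (.elim (.var x) s) k

/-- Simple spine kinding: `γ ⊢ j : V⃗ : k` — applying an operator of shape `j`
to the spine `V⃗` yields a type of shape `k`. -/
inductive SSp : SCtx → SKind → SpSpine → SKind → Prop
  | nil : SSp γ k .nil k
  | cons : SKTy γ U j → SSp γ k s l → SSp γ (.arr j k) (.cons U s) l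

/-- Simple kinding of normal types: `γ ⊢ V : k`. -/
inductive SKTy : SCtx → SpTy → SKind → Prop
  | top : SKTy γ (.elim .top .nil) .star
  | bot : SKTy γ (.elim .bot .nil) .star
  | arr : SKTy γ U .star → SKTy γ V .star → SKTy γ (.elim (.arr U V) .nil) .star
  | all : SWfKd γ K → SKTy (some K.shape :: γ) V .star →
      SKTy γ (.elim (.all K V) .nil) .star
  | lam : SWfKd γ J → SKTy (some J.shape :: γ) V k →
      SKTy γ (.elim (.lam J V) .nil) (.arr J.shape k)
  | ne : SKNe γ N .star → SKTy γ N .star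
end

theorem List.getElem?_append_cons_shift {α : Type*} (l₂ l₁ : List α) (a : α) (x : ℕ) :
    (l₂ ++ a :: l₁)[if x < l₂.length then x else x + 1]? = (l₂ ++ l₁)[x]? := by
  split_ifs with hx
  · simp only [List.getElem?_append_left hx]
  · rw [List.getElem?_append_right (by omega), List.getElem?_append_right (by omega),
      show x + 1 - l₂.length = x - l₂.length + 1 by omega, List.getElem?_cons_succ]

theorem List.getElem?_append_cons_of_ne {α : Type*} (l₂ l₁ : List α) (a : α) {x : ℕ}
    (hx : x ≠ l₂.length) :
    (l₂ ++ a :: l₁)[x]? = (l₂ ++ l₁)[if l₂.length < x then x - 1 else x]? := by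
  rw [← List.getElem?_append_cons_shift l₂ l₁ a]
  congr 1
  split_ifs <;> omega

theorem SpHead.shift_var (c x : ℕ) :
    (SpHead.var x).shift c = .var (if x < c then x else x + 1) := by
  simp only [SpHead.shift]
  split_ifs <;> rfl

theorem SpTy.hsubst_var_self (x : ℕ) (s : SpSpine) (k : SKind) (v : SpTy) :
    (SpTy.elim (.var x) s).hsubst x k v = v.rappSp k (s.hsubst x k v) := by
  simp [SpTy.hsubst]

theorem SpTy.hsubst_var_of_ne {y x : ℕ} (h : y ≠ x) (s : SpSpine) (k : SKind) (v : SpTy) :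
    (SpTy.elim (.var y) s).hsubst x k v =
      .elim (.var (if x < y then y - 1 else y)) (s.hsubst x k v) := by
  simp [SpTy.hsubst, h]

theorem SpSpine.shift_append (c : ℕ) : ∀ s t : SpSpine,
    (s.append t).shift c = (s.shift c).append (t.shift c)
  | .nil, _ => rfl
  | .cons a s, t => by
    simp only [SpSpine.append, SpSpine.shift, SpSpine.shift_append c s t]

theorem SpTy.shift_appSp (c : ℕ) (d : SpTy) (s : SpSpine) :
    (d.appSp s).shift c = (d.shift c).appSp (s.shift c) := by
  cases d
  simp only [SpTy.appSp, SpTy.shift, SpSpine.shift_append]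

theorem SpTy.shift_app1 (c : ℕ) (d v : SpTy) :
    (d.app1 v).shift c = (d.shift c).app1 (v.shift c) := by
  simp only [SpTy.app1, SpTy.shift_appSp, SpSpine.shift]

mutual
theorem SpTy.shift_shift : ∀ (e : SpTy) {c d : ℕ}, c ≤ d →
    (e.shift d).shift c = (e.shift c).shift (d + 1)
  | .elim h s, _, _, hcd => by
    simp only [SpTy.shift, h.shift_shift hcd, s.shift_shift hcd]

theorem SpHead.shift_shift : ∀ (h : SpHead) {c d : ℕ}, c ≤ d →
    (h.shift d).shift c = (h.shift c).shift (d + 1)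
  | .var x, c, d, hcd => by
    simp only [SpHead.shift_var]
    congr 1
    split_ifs <;> omega
  | .top, _, _, _ | .bot, _, _, _ => rfl
  | .arr a b, _, _, hcd => by
    simp only [SpHead.shift, a.shift_shift hcd, b.shift_shift hcd]
  | .all k a, _, _, hcd => by
    simp only [SpHead.shift, k.shift_shift hcd, a.shift_shift (Nat.succ_le_succ hcd)]
  | .lam k a, _, _, hcd => by
    simp only [SpHead.shift, k.shift_shift hcd, a.shift_shift (Nat.succ_le_succ hcd)]

theorem SpSpine.shift_shift : ∀ (s : SpSpine) {c d : ℕ}, c ≤ d →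
    (s.shift d).shift c = (s.shift c).shift (d + 1)
  | .nil, _, _, _ => rfl
  | .cons a s, _, _, hcd => by
    simp only [SpSpine.shift, a.shift_shift hcd, s.shift_shift hcd]

theorem SpKd.shift_shift : ∀ (K : SpKd) {c d : ℕ}, c ≤ d →
    (K.shift d).shift c = (K.shift c).shift (d + 1)
  | .intv a b, _, _, hcd => by
    simp only [SpKd.shift, a.shift_shift hcd, b.shift_shift hcd]
  | .pi j k, _, _, hcd => by
    simp only [SpKd.shift, j.shift_shift hcd, k.shift_shift (Nat.succ_le_succ hcd)]
end

mutual
theorem SpTy.hsubst_shift_self : ∀ (e : SpTy) (x : ℕ) (k : SKind) (v : SpTy),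
    (e.shift x).hsubst x k v = e
  | .elim (.var y) s, x, k, v => by
    rw [SpTy.shift, SpHead.shift_var, SpTy.hsubst_var_of_ne (by split_ifs <;> omega),
      s.hsubst_shift_self]
    congr 2
    split_ifs <;> omega
  | .elim .top s, x, k, v | .elim .bot s, x, k, v => by
    simp only [SpTy.shift, SpHead.shift, SpTy.hsubst, s.hsubst_shift_self]
  | .elim (.arr a b) s, x, k, v => by
    simp only [SpTy.shift, SpHead.shift, SpTy.hsubst, a.hsubst_shift_self,
      b.hsubst_shift_self, s.hsubst_shift_self]
  | .elim (.all j a) s, x, k, v | .elim (.lam j a) s, x, k, v => by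
    simp only [SpTy.shift, SpHead.shift, SpTy.hsubst, j.hsubst_shift_self,
      a.hsubst_shift_self, s.hsubst_shift_self]

theorem SpSpine.hsubst_shift_self : ∀ (s : SpSpine) (x : ℕ) (k : SKind) (v : SpTy),
    (s.shift x).hsubst x k v = s
  | .nil, _, _, _ => by simp only [SpSpine.shift, SpSpine.hsubst]
  | .cons a s, x, k, v => by
    simp only [SpSpine.shift, SpSpine.hsubst, a.hsubst_shift_self, s.hsubst_shift_self]

theorem SpKd.hsubst_shift_self : ∀ (K : SpKd) (x : ℕ) (k : SKind) (v : SpTy),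
    (K.shift x).hsubst x k v = K
  | .intv a b, x, k, v => by
    simp only [SpKd.shift, SpKd.hsubst, a.hsubst_shift_self, b.hsubst_shift_self]
  | .pi j K, x, k, v => by
    simp only [SpKd.shift, SpKd.hsubst, j.hsubst_shift_self, K.hsubst_shift_self]
end

mutual
theorem SpTy.shift_hsubst_of_le : ∀ (e : SpTy) {x c : ℕ} (k : SKind) (v : SpTy), c ≤ x →
    (e.hsubst x k v).shift c = (e.shift c).hsubst (x + 1) k (v.shift c)
  | .elim (.var y) s, x, c, k, v, hcx => by
    by_cases hyx : y = x
    · subst hyx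
      simp only [SpTy.hsubst_var_self, v.shift_rappSp k (s.hsubst y k v) c, s.shift_hsubst_of_le k v hcx,
        SpTy.shift, SpHead.shift_var, if_neg (show ¬y < c by omega)]
    · simp only [SpTy.hsubst_var_of_ne hyx, SpTy.shift, SpHead.shift_var,
        s.shift_hsubst_of_le k v hcx]
      rw [SpTy.hsubst_var_of_ne (by split_ifs <;> omega)]
      congr 2
      split_ifs <;> omega
  | .elim .top s, _, _, k, v, hcx | .elim .bot s, _, _, k, v, hcx => by
    simp only [SpTy.hsubst, SpTy.shift, SpHead.shift, s.shift_hsubst_of_le k v hcx]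
  | .elim (.arr a b) s, _, _, k, v, hcx => by
    simp only [SpTy.hsubst, SpTy.shift, SpHead.shift, s.shift_hsubst_of_le k v hcx,
      a.shift_hsubst_of_le k v hcx, b.shift_hsubst_of_le k v hcx]
  | .elim (.all j a) s, _, c, k, v, hcx | .elim (.lam j a) s, _, c, k, v, hcx => by
    simp only [SpTy.hsubst, SpTy.shift, SpHead.shift, s.shift_hsubst_of_le k v hcx,
      j.shift_hsubst_of_le k v hcx, a.shift_hsubst_of_le k _ (Nat.succ_le_succ hcx),
      v.shift_shift (Nat.zero_le c)]
termination_by e _ _ k => (sizeOf k, 1, sizeOf e)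

theorem SpSpine.shift_hsubst_of_le : ∀ (s : SpSpine) {x c : ℕ} (k : SKind) (v : SpTy), c ≤ x →
    (s.hsubst x k v).shift c = (s.shift c).hsubst (x + 1) k (v.shift c)
  | .nil, _, _, _, _, _ => by simp only [SpSpine.hsubst, SpSpine.shift]
  | .cons a s, _, _, k, v, hcx => by
    simp only [SpSpine.hsubst, SpSpine.shift, a.shift_hsubst_of_le k v hcx,
      s.shift_hsubst_of_le k v hcx]
termination_by s _ _ k => (sizeOf k, 1, sizeOf s)

theorem SpKd.shift_hsubst_of_le : ∀ (K : SpKd) {x c : ℕ} (k : SKind) (v : SpTy), c ≤ x →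
    (K.hsubst x k v).shift c = (K.shift c).hsubst (x + 1) k (v.shift c)
  | .intv a b, _, _, k, v, hcx => by
    simp only [SpKd.hsubst, SpKd.shift, a.shift_hsubst_of_le k v hcx,
      b.shift_hsubst_of_le k v hcx]
  | .pi j K, _, c, k, v, hcx => by
    simp only [SpKd.hsubst, SpKd.shift, j.shift_hsubst_of_le k v hcx,
      K.shift_hsubst_of_le k _ (Nat.succ_le_succ hcx), v.shift_shift (Nat.zero_le c)]
termination_by K _ _ k => (sizeOf k, 1, sizeOf K)

theorem SpTy.shift_hsubst_of_ge : ∀ (e : SpTy) {x c : ℕ} (k : SKind) (v : SpTy), x ≤ c →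
    (e.hsubst x k v).shift c = (e.shift (c + 1)).hsubst x k (v.shift c)
  | .elim (.var y) s, x, c, k, v, hxc => by
    by_cases hyx : y = x
    · subst hyx
      simp only [SpTy.hsubst_var_self, v.shift_rappSp k (s.hsubst y k v) c, s.shift_hsubst_of_ge k v hxc,
        SpTy.shift, SpHead.shift_var, if_pos (show y < c + 1 by omega)]
    · simp only [SpTy.hsubst_var_of_ne hyx, SpTy.shift, SpHead.shift_var,
        s.shift_hsubst_of_ge k v hxc]
      rw [SpTy.hsubst_var_of_ne (by split_ifs <;> omega)]
      congr 2
      split_ifs <;> omega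
  | .elim .top s, _, _, k, v, hxc | .elim .bot s, _, _, k, v, hxc => by
    simp only [SpTy.hsubst, SpTy.shift, SpHead.shift, s.shift_hsubst_of_ge k v hxc]
  | .elim (.arr a b) s, _, _, k, v, hxc => by
    simp only [SpTy.hsubst, SpTy.shift, SpHead.shift, s.shift_hsubst_of_ge k v hxc,
      a.shift_hsubst_of_ge k v hxc, b.shift_hsubst_of_ge k v hxc]
  | .elim (.all j a) s, _, c, k, v, hxc | .elim (.lam j a) s, _, c, k, v, hxc => by
    simp only [SpTy.hsubst, SpTy.shift, SpHead.shift, s.shift_hsubst_of_ge k v hxc,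
      j.shift_hsubst_of_ge k v hxc, a.shift_hsubst_of_ge k _ (Nat.succ_le_succ hxc),
      v.shift_shift (Nat.zero_le c)]
termination_by e _ _ k => (sizeOf k, 1, sizeOf e)

theorem SpSpine.shift_hsubst_of_ge : ∀ (s : SpSpine) {x c : ℕ} (k : SKind) (v : SpTy), x ≤ c →
    (s.hsubst x k v).shift c = (s.shift (c + 1)).hsubst x k (v.shift c)
  | .nil, _, _, _, _, _ => by simp only [SpSpine.hsubst, SpSpine.shift]
  | .cons a s, _, _, k, v, hxc => by
    simp only [SpSpine.hsubst, SpSpine.shift, a.shift_hsubst_of_ge k v hxc,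
      s.shift_hsubst_of_ge k v hxc]
termination_by s _ _ k => (sizeOf k, 1, sizeOf s)

theorem SpKd.shift_hsubst_of_ge : ∀ (K : SpKd) {x c : ℕ} (k : SKind) (v : SpTy), x ≤ c →
    (K.hsubst x k v).shift c = (K.shift (c + 1)).hsubst x k (v.shift c)
  | .intv a b, _, _, k, v, hxc => by
    simp only [SpKd.hsubst, SpKd.shift, a.shift_hsubst_of_ge k v hxc,
      b.shift_hsubst_of_ge k v hxc]
  | .pi j K, _, c, k, v, hxc => by
    simp only [SpKd.hsubst, SpKd.shift, j.shift_hsubst_of_ge k v hxc,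
      K.shift_hsubst_of_ge k _ (Nat.succ_le_succ hxc), v.shift_shift (Nat.zero_le c)]
termination_by K _ _ k => (sizeOf k, 1, sizeOf K)

theorem SpTy.shift_rapp : ∀ (d : SpTy) (k : SKind) (v : SpTy) (c : ℕ),
    (d.rapp k v).shift c = (d.shift c).rapp k (v.shift c)
  | d, .star, v, c => by simp only [SpTy.rapp, SpTy.shift_app1]
  | .elim (.lam _ a) .nil, .arr k₁ _, v, c => by
    simp only [SpTy.rapp, SpTy.shift, SpHead.shift, SpSpine.shift]
    exact a.shift_hsubst_of_ge k₁ v (Nat.zero_le c)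
  | .elim (.var _) _, .arr _ _, _, _ => by
    simp only [SpTy.rapp, SpTy.shift_app1, SpTy.shift, SpHead.shift_var]
  | .elim (.lam _ _) (.cons _ _), .arr _ _, _, _ | .elim .top _, .arr _ _, _, _
  | .elim .bot _, .arr _ _, _, _ | .elim (.arr _ _) _, .arr _ _, _, _
  | .elim (.all _ _) _, .arr _ _, _, _ => by
    simp only [SpTy.rapp, SpTy.shift_app1, SpTy.shift, SpHead.shift, SpSpine.shift]
termination_by _ k => (sizeOf k, 0, 0)

theorem SpTy.shift_rappSp : ∀ (d : SpTy) (k : SKind) (s : SpSpine) (c : ℕ),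
    (d.rappSp k s).shift c = (d.shift c).rappSp k (s.shift c)
  | _, _, .nil, _ => by simp only [SpTy.rappSp, SpSpine.shift]
  | _, .star, .cons _ _, _ => by simp only [SpTy.rappSp, SpSpine.shift, SpTy.shift_appSp]
  | d, .arr k₁ k₂, .cons e es, c => by
    simp only [SpTy.rappSp, SpSpine.shift, (d.rapp (.arr k₁ k₂) e).shift_rappSp k₂ es c,
      d.shift_rapp (.arr k₁ k₂) e c]
termination_by _ k s => (sizeOf k, 0, sizeOf s + 1)
end

theorem SpTy.weaken_zero (e : SpTy) : e.weaken 0 = e := rfl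

theorem SpTy.weaken_succ (e : SpTy) (n : ℕ) : e.weaken (n + 1) = (e.weaken n).shift 0 :=
  Function.iterate_succ_apply' _ _ _

theorem SpTy.weaken_weaken (e : SpTy) (m n : ℕ) : (e.weaken m).weaken n = e.weaken (n + m) :=
  (Function.iterate_add_apply _ _ _ _).symm

theorem SpTy.weaken_succ_eq_shift (e : SpTy) {m x : ℕ} (hx : x ≤ m) :
    e.weaken (m + 1) = (e.weaken m).shift x := by
  induction m generalizing x with
  | zero =>
    obtain rfl : x = 0 := by omega
    exact e.weaken_succ 0
  | succ m ih =>
    cases x with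
    | zero => exact e.weaken_succ (m + 1)
    | succ x =>
      calc e.weaken (m + 1 + 1) = ((e.weaken m).shift x).shift 0 := by
            rw [e.weaken_succ (m + 1), ih (show x ≤ m by omega)]
        _ = ((e.weaken m).shift 0).shift (x + 1) := SpTy.shift_shift _ (Nat.zero_le x)
        _ = (e.weaken (m + 1)).shift (x + 1) := by rw [SpTy.weaken_succ]

theorem SpTy.hsubst_weaken_succ (e : SpTy) {m x : ℕ} (hx : x ≤ m) (k : SKind) (v : SpTy) :
    (e.weaken (m + 1)).hsubst x k v = e.weaken m := by
  rw [e.weaken_succ_eq_shift hx, SpTy.hsubst_shift_self]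

theorem SpTy.weaken_hsubst (n : ℕ) (e : SpTy) (x : ℕ) (k : SKind) (v : SpTy) :
    (e.hsubst x k v).weaken n = (e.weaken n).hsubst (x + n) k (v.weaken n) := by
  induction n with
  | zero => rfl
  | succ n ih =>
    rw [SpTy.weaken_succ, ih, SpTy.shift_hsubst_of_le _ _ _ (Nat.zero_le _),
      ← SpTy.weaken_succ, ← SpTy.weaken_succ, Nat.add_assoc]

theorem SpKd.shape_shift : ∀ (K : SpKd) (c : ℕ), (K.shift c).shape = K.shape
  | .intv _ _, _ => rfl
  | .pi j k, c => by simp only [SpKd.shift, SpKd.shape, j.shape_shift, k.shape_shift]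

theorem SpKd.shape_hsubst : ∀ (K : SpKd) (x : ℕ) (k : SKind) (v : SpTy),
    (K.hsubst x k v).shape = K.shape
  | .intv _ _, _, _, _ => by simp only [SpKd.hsubst, SpKd.shape]
  | .pi j K, _, _, _ => by simp only [SpKd.hsubst, SpKd.shape, j.shape_hsubst, K.shape_hsubst]

mutual
theorem SKTy.shift {Γ₂ Γ₁ : SCtx} (A : Option SKind) {e : SpTy} {k : SKind}
    (h : SKTy (Γ₂ ++ Γ₁) e k) : SKTy (Γ₂ ++ A :: Γ₁) (e.shift Γ₂.length) k := by
  cases h with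
  | top => exact .top
  | bot => exact .bot
  | arr hU hV => exact .arr (hU.shift A) (hV.shift A)
  | all hK hV =>
    have hV' := SKTy.shift (Γ₂ := some _ :: Γ₂) A hV
    simp only [SpTy.shift, SpHead.shift, SpSpine.shift]
    exact .all (hK.shift A) (by rwa [SpKd.shape_shift])
  | lam hK hV =>
    have hV' := SKTy.shift (Γ₂ := some _ :: Γ₂) A hV
    have hlam := SKTy.lam (hK.shift A) (by rwa [SpKd.shape_shift])
    simp only [SpTy.shift, SpHead.shift, SpSpine.shift]
    rwa [SpKd.shape_shift] at hlam
  | ne hN => exact .ne (hN.shift A)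
termination_by (sizeOf e, 1)

theorem SKNe.shift {Γ₂ Γ₁ : SCtx} (A : Option SKind) {e : SpTy} {k : SKind}
    (h : SKNe (Γ₂ ++ Γ₁) e k) : SKNe (Γ₂ ++ A :: Γ₁) (e.shift Γ₂.length) k := by
  cases h with
  | varApp hx hs =>
    simp only [SpTy.shift, SpHead.shift_var]
    exact .varApp (by rwa [List.getElem?_append_cons_shift]) (hs.shift A)
termination_by (sizeOf e, 0)

theorem SSp.shift {Γ₂ Γ₁ : SCtx} (A : Option SKind) {j : SKind} {s : SpSpine} {k : SKind}
    (h : SSp (Γ₂ ++ Γ₁) j s k) : SSp (Γ₂ ++ A :: Γ₁) j (s.shift Γ₂.length) k := by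
  cases h with
  | nil => exact .nil
  | cons hU hs => exact .cons (hU.shift A) (hs.shift A)
termination_by (sizeOf s, 0)

theorem SWfKd.shift {Γ₂ Γ₁ : SCtx} (A : Option SKind) {K : SpKd}
    (h : SWfKd (Γ₂ ++ Γ₁) K) : SWfKd (Γ₂ ++ A :: Γ₁) (K.shift Γ₂.length) := by
  cases h with
  | intv hU hV => exact .intv (hU.shift A) (hV.shift A)
  | pi hJ hK =>
    have hK' := SWfKd.shift (Γ₂ := some _ :: Γ₂) A hK
    exact .pi (hJ.shift A) (by rwa [SpKd.shape_shift])
termination_by (sizeOf K, 0)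
end

theorem SKTy.weaken (Δ : SCtx) {Γ : SCtx} {e : SpTy} {k : SKind} (h : SKTy Γ e k) :
    SKTy (Δ ++ Γ) (e.weaken Δ.length) k := by
  induction Δ with
  | nil => exact h
  | cons A Δ ih =>
    rw [List.length_cons, SpTy.weaken_succ]
    exact SKTy.shift (Γ₂ := []) A ih

mutual
theorem SKTy.hsubst {Δ₂ Δ₁ : SCtx} {j : SKind} {U W : SpTy} {l : SKind}
    (h : SKTy (Δ₂ ++ some j :: Δ₁) W l) (hU : SKTy Δ₁ U j) :
    SKTy (Δ₂ ++ Δ₁) (W.hsubst Δ₂.length j (U.weaken Δ₂.length)) l := by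
  cases h with
  | top => simpa only [SpTy.hsubst, SpSpine.hsubst] using .top
  | bot => simpa only [SpTy.hsubst, SpSpine.hsubst] using .bot
  | arr ha hb =>
    simpa only [SpTy.hsubst, SpSpine.hsubst] using .arr (ha.hsubst hU) (hb.hsubst hU)
  | all hK hV =>
    have hV' := SKTy.hsubst (Δ₂ := some _ :: Δ₂) hV hU
    simp only [SpTy.hsubst, SpSpine.hsubst, ← SpTy.weaken_succ]
    exact .all (hK.hsubst hU) (by rwa [SpKd.shape_hsubst])
  | lam hK hV =>
    have hV' := SKTy.hsubst (Δ₂ := some _ :: Δ₂) hV hU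
    have hlam := SKTy.lam (hK.hsubst hU) (by rwa [SpKd.shape_hsubst])
    simp only [SpTy.hsubst, SpSpine.hsubst, ← SpTy.weaken_succ]
    rwa [SpKd.shape_hsubst] at hlam
  | ne hN => exact (hN.hsubst hU).elim id .ne
termination_by (sizeOf j, 1, sizeOf W, 1)

theorem SWfKd.hsubst {Δ₂ Δ₁ : SCtx} {j : SKind} {U : SpTy} {K : SpKd}
    (h : SWfKd (Δ₂ ++ some j :: Δ₁) K) (hU : SKTy Δ₁ U j) :
    SWfKd (Δ₂ ++ Δ₁) (K.hsubst Δ₂.length j (U.weaken Δ₂.length)) := by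
  cases h with
  | intv ha hb => simpa only [SpKd.hsubst] using .intv (ha.hsubst hU) (hb.hsubst hU)
  | pi hJ hK =>
    have hK' := SWfKd.hsubst (Δ₂ := some _ :: Δ₂) hK hU
    simp only [SpKd.hsubst, ← SpTy.weaken_succ]
    exact .pi (hJ.hsubst hU) (by rwa [SpKd.shape_hsubst])
termination_by (sizeOf j, 1, sizeOf K, 1)

theorem SKNe.hsubst {Δ₂ Δ₁ : SCtx} {j : SKind} {U N : SpTy} {l : SKind}
    (h : SKNe (Δ₂ ++ some j :: Δ₁) N l) (hU : SKTy Δ₁ U j) :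
    SKTy (Δ₂ ++ Δ₁) (N.hsubst Δ₂.length j (U.weaken Δ₂.length)) l ∨
      SKNe (Δ₂ ++ Δ₁) (N.hsubst Δ₂.length j (U.weaken Δ₂.length)) l := by
  cases h with
  | @varApp _ x j' s _ hx hs =>
    by_cases hxn : x = Δ₂.length
    · subst hxn
      obtain rfl : j = j' := by simpa using hx
      rw [SpTy.hsubst_var_self]
      exact .inl ((hU.weaken Δ₂).rappSp (hs.hsubst hU))
    · rw [SpTy.hsubst_var_of_ne hxn]
      rw [List.getElem?_append_cons_of_ne _ _ _ hxn] at hx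
      exact .inr (.varApp hx (hs.hsubst hU))
termination_by (sizeOf j, 1, sizeOf N, 0)

theorem SSp.hsubst {Δ₂ Δ₁ : SCtx} {j : SKind} {U : SpTy} {l₁ : SKind} {s : SpSpine}
    {l₂ : SKind} (h : SSp (Δ₂ ++ some j :: Δ₁) l₁ s l₂) (hU : SKTy Δ₁ U j) :
    SSp (Δ₂ ++ Δ₁) l₁ (s.hsubst Δ₂.length j (U.weaken Δ₂.length)) l₂ := by
  cases h with
  | nil => simpa only [SpSpine.hsubst] using .nil
  | cons ha hs => simpa only [SpSpine.hsubst] using .cons (ha.hsubst hU) (hs.hsubst hU)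
termination_by (sizeOf j, 1, sizeOf s, 0)

theorem SKTy.rappSp {Δ : SCtx} {j : SKind} {d : SpTy} {s : SpSpine} {l : SKind}
    (hd : SKTy Δ d j) (hs : SSp Δ j s l) : SKTy Δ (d.rappSp j s) l := by
  cases hs with
  | nil => simpa only [SpTy.rappSp] using hd
  | cons ha hs =>
    cases hd with
    | lam _ hV =>
      simp only [SpTy.rappSp, SpTy.rapp]
      exact (SKTy.hsubst (Δ₂ := []) hV ha).rappSp hs
termination_by (sizeOf j, 0, sizeOf s, 0)
end

theorem SKTy.rapp {Δ : SCtx} {k₁ k₂ : SKind} {d w : SpTy} (hd : SKTy Δ d (.arr k₁ k₂))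
    (hw : SKTy Δ w k₁) : SKTy Δ (d.rapp (.arr k₁ k₂) w) k₂ := by
  simpa only [SpTy.rappSp] using hd.rappSp (.cons hw .nil)

mutual
theorem SKTy.hsubst_hsubst {Γ₃ Γ₂ Γ₁ : SCtx} {j k l : SKind} {U V W : SpTy}
    (hW : SKTy (Γ₃ ++ some k :: Γ₂ ++ some j :: Γ₁) W l) (hU : SKTy Γ₁ U j)
    (hV : SKTy (Γ₂ ++ some j :: Γ₁) V k) :
    (W.hsubst Γ₃.length k (V.weaken Γ₃.length)).hsubst
        (Γ₃.length + Γ₂.length) j (U.weaken (Γ₃.length + Γ₂.length)) =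
      (W.hsubst (Γ₃.length + Γ₂.length + 1) j (U.weaken (Γ₃.length + Γ₂.length + 1))).hsubst
        Γ₃.length k ((V.hsubst Γ₂.length j (U.weaken Γ₂.length)).weaken Γ₃.length) := by
  cases hW with
  | top | bot => simp only [SpTy.hsubst, SpSpine.hsubst]
  | arr ha hb =>
    simp only [SpTy.hsubst, SpSpine.hsubst, ha.hsubst_hsubst hU hV, hb.hsubst_hsubst hU hV]
  | all hK ha | lam hK ha =>
    have ih := SKTy.hsubst_hsubst (Γ₃ := some _ :: Γ₃) ha hU hV
    rw [List.length_cons, Nat.add_right_comm _ 1] at ih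
    simp only [SpTy.hsubst, SpSpine.hsubst, ← SpTy.weaken_succ, ih, hK.hsubst_hsubst hU hV]
  | ne hN => exact hN.hsubst_hsubst hU hV
termination_by (sizeOf j + sizeOf k, 2, sizeOf W, 1)

theorem SWfKd.hsubst_hsubst {Γ₃ Γ₂ Γ₁ : SCtx} {j k : SKind} {U V : SpTy} {K : SpKd}
    (hK : SWfKd (Γ₃ ++ some k :: Γ₂ ++ some j :: Γ₁) K) (hU : SKTy Γ₁ U j)
    (hV : SKTy (Γ₂ ++ some j :: Γ₁) V k) :
    (K.hsubst Γ₃.length k (V.weaken Γ₃.length)).hsubst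
        (Γ₃.length + Γ₂.length) j (U.weaken (Γ₃.length + Γ₂.length)) =
      (K.hsubst (Γ₃.length + Γ₂.length + 1) j (U.weaken (Γ₃.length + Γ₂.length + 1))).hsubst
        Γ₃.length k ((V.hsubst Γ₂.length j (U.weaken Γ₂.length)).weaken Γ₃.length) := by
  cases hK with
  | intv ha hb =>
    simp only [SpKd.hsubst, ha.hsubst_hsubst hU hV, hb.hsubst_hsubst hU hV]
  | pi hJ hK =>
    have ih := SWfKd.hsubst_hsubst (Γ₃ := some _ :: Γ₃) hK hU hV
    rw [List.length_cons, Nat.add_right_comm _ 1] at ih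
    simp only [SpKd.hsubst, ← SpTy.weaken_succ, ih, hJ.hsubst_hsubst hU hV]
termination_by (sizeOf j + sizeOf k, 2, sizeOf K, 1)

theorem SKNe.hsubst_hsubst {Γ₃ Γ₂ Γ₁ : SCtx} {j k l : SKind} {U V N : SpTy}
    (hN : SKNe (Γ₃ ++ some k :: Γ₂ ++ some j :: Γ₁) N l) (hU : SKTy Γ₁ U j)
    (hV : SKTy (Γ₂ ++ some j :: Γ₁) V k) :
    (N.hsubst Γ₃.length k (V.weaken Γ₃.length)).hsubst
        (Γ₃.length + Γ₂.length) j (U.weaken (Γ₃.length + Γ₂.length)) =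
      (N.hsubst (Γ₃.length + Γ₂.length + 1) j (U.weaken (Γ₃.length + Γ₂.length + 1))).hsubst
        Γ₃.length k ((V.hsubst Γ₂.length j (U.weaken Γ₂.length)).weaken Γ₃.length) := by
  cases hN with
  | @varApp _ x j' s _ hx hs =>
    by_cases hy : x = Γ₃.length
    · subst hy
      obtain rfl : k = j' := by simpa using hx
      exact hs.hsubst_hsubst_var_inner hU hV
    by_cases hx' : x = Γ₃.length + Γ₂.length + 1
    · subst hx'
      have hlen : (Γ₃ ++ some k :: Γ₂).length = Γ₃.length + Γ₂.length + 1 := by simp; omega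
      obtain rfl : j = j' := by simpa [← hlen] using hx
      exact hs.hsubst_hsubst_var_outer hU hV
    rw [SpTy.hsubst_var_of_ne hy, SpTy.hsubst_var_of_ne hx',
      SpTy.hsubst_var_of_ne (by split_ifs <;> omega),
      SpTy.hsubst_var_of_ne (by split_ifs <;> omega), hs.hsubst_hsubst hU hV]
    congr 2
    split_ifs <;> omega
termination_by (sizeOf j + sizeOf k, 2, sizeOf N, 0)

theorem SSp.hsubst_hsubst {Γ₃ Γ₂ Γ₁ : SCtx} {j k l₁ l₂ : SKind} {U V : SpTy} {s : SpSpine}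
    (hs : SSp (Γ₃ ++ some k :: Γ₂ ++ some j :: Γ₁) l₁ s l₂) (hU : SKTy Γ₁ U j)
    (hV : SKTy (Γ₂ ++ some j :: Γ₁) V k) :
    (s.hsubst Γ₃.length k (V.weaken Γ₃.length)).hsubst
        (Γ₃.length + Γ₂.length) j (U.weaken (Γ₃.length + Γ₂.length)) =
      (s.hsubst (Γ₃.length + Γ₂.length + 1) j (U.weaken (Γ₃.length + Γ₂.length + 1))).hsubst
        Γ₃.length k ((V.hsubst Γ₂.length j (U.weaken Γ₂.length)).weaken Γ₃.length) := by
  cases hs with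
  | nil => simp only [SpSpine.hsubst]
  | cons ha hs =>
    simp only [SpSpine.hsubst, ha.hsubst_hsubst hU hV, hs.hsubst_hsubst hU hV]
termination_by (sizeOf j + sizeOf k, 2, sizeOf s, 0)

theorem SSp.hsubst_hsubst_var_inner {Γ₃ Γ₂ Γ₁ : SCtx} {j k l : SKind} {U V : SpTy}
    {s : SpSpine} (hs : SSp (Γ₃ ++ some k :: Γ₂ ++ some j :: Γ₁) k s l) (hU : SKTy Γ₁ U j)
    (hV : SKTy (Γ₂ ++ some j :: Γ₁) V k) :
    ((SpTy.elim (.var Γ₃.length) s).hsubst Γ₃.length k (V.weaken Γ₃.length)).hsubst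
        (Γ₃.length + Γ₂.length) j (U.weaken (Γ₃.length + Γ₂.length)) =
      ((SpTy.elim (.var Γ₃.length) s).hsubst (Γ₃.length + Γ₂.length + 1) j
          (U.weaken (Γ₃.length + Γ₂.length + 1))).hsubst
        Γ₃.length k ((V.hsubst Γ₂.length j (U.weaken Γ₂.length)).weaken Γ₃.length) := by
  have hVw : SKTy ((Γ₃ ++ Γ₂) ++ some j :: Γ₁) (V.weaken Γ₃.length) k := by
    simpa using hV.weaken Γ₃
  have hs' : SSp ((Γ₃ ++ Γ₂) ++ some j :: Γ₁) k
      (s.hsubst Γ₃.length k (V.weaken Γ₃.length)) l := by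
    simpa using SSp.hsubst (Δ₂ := Γ₃) (by simpa using hs) hV
  have hV' : (V.weaken Γ₃.length).hsubst (Γ₃.length + Γ₂.length) j
      (U.weaken (Γ₃.length + Γ₂.length)) =
      (V.hsubst Γ₂.length j (U.weaken Γ₂.length)).weaken Γ₃.length := by
    rw [SpTy.weaken_hsubst, SpTy.weaken_weaken, Nat.add_comm Γ₂.length]
  have hhead := hVw.hsubst_rappSp hs' hU
  rw [List.length_append] at hhead
  rw [SpTy.hsubst_var_self, SpTy.hsubst_var_of_ne (by omega), if_neg (by omega),
    SpTy.hsubst_var_self, hhead, hV', hs.hsubst_hsubst hU hV]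
termination_by (sizeOf j + sizeOf k, 2, sizeOf s, 1)

theorem SSp.hsubst_hsubst_var_outer {Γ₃ Γ₂ Γ₁ : SCtx} {j k l : SKind} {U V : SpTy}
    {s : SpSpine} (hs : SSp (Γ₃ ++ some k :: Γ₂ ++ some j :: Γ₁) j s l) (hU : SKTy Γ₁ U j)
    (hV : SKTy (Γ₂ ++ some j :: Γ₁) V k) :
    ((SpTy.elim (.var (Γ₃.length + Γ₂.length + 1)) s).hsubst Γ₃.length k
          (V.weaken Γ₃.length)).hsubst
        (Γ₃.length + Γ₂.length) j (U.weaken (Γ₃.length + Γ₂.length)) =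
      ((SpTy.elim (.var (Γ₃.length + Γ₂.length + 1)) s).hsubst (Γ₃.length + Γ₂.length + 1) j
          (U.weaken (Γ₃.length + Γ₂.length + 1))).hsubst
        Γ₃.length k ((V.hsubst Γ₂.length j (U.weaken Γ₂.length)).weaken Γ₃.length) := by
  have hUw : SKTy (Γ₃ ++ some k :: (Γ₂ ++ Γ₁)) (U.weaken (Γ₃.length + Γ₂.length + 1)) j := by
    simpa [← Nat.add_assoc] using hU.weaken (Γ₃ ++ some k :: Γ₂)
  have hs' : SSp (Γ₃ ++ some k :: (Γ₂ ++ Γ₁)) j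
      (s.hsubst (Γ₃.length + Γ₂.length + 1) j (U.weaken (Γ₃.length + Γ₂.length + 1))) l := by
    simpa [← Nat.add_assoc] using SSp.hsubst (Δ₂ := Γ₃ ++ some k :: Γ₂) hs hU
  rw [SpTy.hsubst_var_of_ne (by omega), if_pos (by omega), Nat.add_sub_cancel,
    SpTy.hsubst_var_self, SpTy.hsubst_var_self, hUw.hsubst_rappSp hs' (hV.hsubst hU),
    SpTy.hsubst_weaken_succ _ (by omega), hs.hsubst_hsubst hU hV]
termination_by (sizeOf j + sizeOf k, 2, sizeOf s, 1)
-- `hsubst_rappSp` is called here with the roles of `j` and `k` swapped.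
decreasing_by all_goals (simp [Prod.lex_def] <;> omega)

theorem SKTy.hsubst_rappSp {Δ₂ Δ₁ : SCtx} {σ κ l : SKind} {U d : SpTy} {s : SpSpine}
    (hd : SKTy (Δ₂ ++ some σ :: Δ₁) d κ) (hs : SSp (Δ₂ ++ some σ :: Δ₁) κ s l)
    (hU : SKTy Δ₁ U σ) :
    (d.rappSp κ s).hsubst Δ₂.length σ (U.weaken Δ₂.length) =
      (d.hsubst Δ₂.length σ (U.weaken Δ₂.length)).rappSp κ
        (s.hsubst Δ₂.length σ (U.weaken Δ₂.length)) := by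
  cases hs with
  | nil => simp only [SpTy.rappSp, SpSpine.hsubst]
  | cons ha hs =>
    simp only [SpTy.rappSp, SpSpine.hsubst]
    rw [(hd.rapp ha).hsubst_rappSp hs hU, hd.hsubst_rapp ha hU]
termination_by (sizeOf σ + sizeOf κ, 1, 0, 0)
decreasing_by all_goals (subst_vars; simp [Prod.lex_def] <;> omega)

theorem SKTy.hsubst_rapp {Δ₂ Δ₁ : SCtx} {σ k₁ k₂ : SKind} {U d w : SpTy}
    (hd : SKTy (Δ₂ ++ some σ :: Δ₁) d (.arr k₁ k₂)) (hw : SKTy (Δ₂ ++ some σ :: Δ₁) w k₁)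
    (hU : SKTy Δ₁ U σ) :
    (d.rapp (.arr k₁ k₂) w).hsubst Δ₂.length σ (U.weaken Δ₂.length) =
      (d.hsubst Δ₂.length σ (U.weaken Δ₂.length)).rapp (.arr k₁ k₂)
        (w.hsubst Δ₂.length σ (U.weaken Δ₂.length)) := by
  cases hd with
  | lam _ hV =>
    simp only [SpTy.rapp, SpTy.hsubst, SpSpine.hsubst, ← SpTy.weaken_succ]
    simpa only [List.length_nil, Nat.zero_add, SpTy.weaken_zero] using SKTy.hsubst_hsubst (Γ₃ := []) hV hU hw
termination_by (sizeOf σ + sizeOf k₁ + sizeOf k₂ + 1, 0, 0, 0)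
end

/-- **Hereditary substitutions of simply kinded types commute**: given
`γ₁ ⊢ U : j`, `γ₁, X:j, γ₂ ⊢ V : k` and a subject simply kinded in
`γ₁, X:j, γ₂, Y:k, γ₃` (so that, in de Bruijn representation, `Y` is the
index `γ₃.length` and `X` the index `γ₃.length + 1 + γ₂.length`, and the
substituted values are weakened accordingly), we have
`W[Y:=V]_k[X:=U]_j ≡ W[X:=U]_j[Y:=V[X:=U]_j]_k`, and analogously for kinds,
neutral types, spines, and reducing applications. -/
theorem hsubst_comm :
    ∀ (γ₁ γ₂ γ₃ : SCtx) (j k : SKind) (U V : SpTy),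
      SKTy γ₁ U j →
      SKTy (γ₂ ++ some j :: γ₁) V k →
      (∀ (W : SpTy) (l : SKind),
        SKTy (γ₃ ++ some k :: γ₂ ++ some j :: γ₁) W l →
        ((W.hsubst γ₃.length k (V.weaken γ₃.length)).hsubst
            (γ₃.length + γ₂.length) j (U.weaken (γ₃.length + γ₂.length))) =
        ((W.hsubst (γ₃.length + γ₂.length + 1) j
              (U.weaken (γ₃.length + γ₂.length + 1))).hsubst
            γ₃.length k
            ((V.hsubst γ₂.length j (U.weaken γ₂.length)).weaken γ₃.length))) ∧
      (∀ (J : SpKd),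
        SWfKd (γ₃ ++ some k :: γ₂ ++ some j :: γ₁) J →
        ((J.hsubst γ₃.length k (V.weaken γ₃.length)).hsubst
            (γ₃.length + γ₂.length) j (U.weaken (γ₃.length + γ₂.length))) =
        ((J.hsubst (γ₃.length + γ₂.length + 1) j
              (U.weaken (γ₃.length + γ₂.length + 1))).hsubst
            γ₃.length k
            ((V.hsubst γ₂.length j (U.weaken γ₂.length)).weaken γ₃.length))) ∧
      (∀ (N : SpTy) (l : SKind),
        SKNe (γ₃ ++ some k :: γ₂ ++ some j :: γ₁) N l →
        ((N.hsubst γ₃.length k (V.weaken γ₃.length)).hsubst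
            (γ₃.length + γ₂.length) j (U.weaken (γ₃.length + γ₂.length))) =
        ((N.hsubst (γ₃.length + γ₂.length + 1) j
              (U.weaken (γ₃.length + γ₂.length + 1))).hsubst
            γ₃.length k
            ((V.hsubst γ₂.length j (U.weaken γ₂.length)).weaken γ₃.length))) ∧
      (∀ (s : SpSpine) (l₁ l₂ : SKind),
        SSp (γ₃ ++ some k :: γ₂ ++ some j :: γ₁) l₁ s l₂ →
        ((s.hsubst γ₃.length k (V.weaken γ₃.length)).hsubst
            (γ₃.length + γ₂.length) j (U.weaken (γ₃.length + γ₂.length))) =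
        ((s.hsubst (γ₃.length + γ₂.length + 1) j
              (U.weaken (γ₃.length + γ₂.length + 1))).hsubst
            γ₃.length k
            ((V.hsubst γ₂.length j (U.weaken γ₂.length)).weaken γ₃.length))) ∧
      (∀ (W : SpTy) (k₁ k₂ : SKind),
        k = SKind.arr k₁ k₂ →
        SKTy (γ₂ ++ some j :: γ₁) W k₁ →
        ((V.rapp (.arr k₁ k₂) W).hsubst γ₂.length j (U.weaken γ₂.length)) =
        ((V.hsubst γ₂.length j (U.weaken γ₂.length)).rapp (.arr k₁ k₂)
            (W.hsubst γ₂.length j (U.weaken γ₂.length)))) := by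
  intro γ₁ γ₂ γ₃ j k U V hU hV
  refine ⟨fun W l hW => hW.hsubst_hsubst hU hV, fun J hJ => hJ.hsubst_hsubst hU hV,
    fun N l hN => hN.hsubst_hsubst hU hV, fun s l₁ l₂ hs => hs.hsubst_hsubst hU hV, ?_⟩
  rintro W k₁ k₂ rfl hW
  exact hV.hsubst_rapp hW hU
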